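/- Let Q ⊂ ℝ^D be a bounded domain and let V_n : Q → ℝ be a sequence of measurable functions with sup_n ‖V_n‖_{L^∞(Q)} < ∞. Suppose there exists V ∈ L^∞(Q) such that for every ε > 0 the set S_ε = { (n,m) ∈ ℕ×ℕ : |∫_Q (V_n − V)(V_m − V) dx| < ε } is statistically significant. Then for every regular summation method {s_{n,N}} and every 1 ≤ q < ∞, the weighted averages (1/N) Σ_{n=1}^N s_{n,N} V_n converge to V in L^q(Q) as N → ∞. -/

import Mathlib

/-!
Write `W_n = V_n - V`. Since `∑ₙ s_{n,N} = N`, the square of the `L²` distance of the `N`-th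
weighted average from `V` is `N⁻² ∑_{n,m ≤ N} s_{n,N} s_{m,N} ∫ W_n W_m`, at most `s̄²` times the
Cesàro mean of `|∫ W_n W_m|` over `[1,N]²`. This double sequence is bounded and, off a set of
density zero, smaller than any given `ε`, so its Cesàro mean tends to `0`. The weighted averages are
uniformly bounded, so on the finite measure space `Q` their `L²` convergence gives convergence in
measure together with uniform integrability in `L^q`, hence `L^q` convergence by Vitali's theorem.
-/

open MeasureTheory Filter Finset
open scoped ENNReal NNReal Topology

def IsRegularSummation (s : ℕ → ℕ → ℝ) (sbar : ℝ) : Prop :=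
  (∀ n N, 0 ≤ s n N) ∧ (∀ n N, s n N ≤ sbar) ∧
  (∀ n N, N < n → s n N = 0) ∧
  (∀ N : ℕ, ∑ n ∈ Finset.Icc 1 N, s n N = (N : ℝ))

def StatSignificant (S : Set (ℕ × ℕ)) : Prop :=
  Filter.Tendsto
    (fun N : ℕ => ((S ∩ {p : ℕ × ℕ | p.1 ≤ N ∧ p.2 ≤ N}).ncard : ℝ) / (N : ℝ) ^ 2)
    Filter.atTop (nhds 1)

theorem StatSignificant.tendsto_card_filter_notMem_div_sq {S : Set (ℕ × ℕ)}
    [DecidablePred (· ∈ S)] (hS : StatSignificant S) :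
    Tendsto (fun N : ℕ => (#{p ∈ Icc 1 N ×ˢ Icc 1 N | p ∉ S} : ℝ) / (N : ℝ) ^ 2)
      atTop (𝓝 0) := by
  set box : ℕ → Finset (ℕ × ℕ) := fun N => range (N + 1) ×ˢ range (N + 1)
  have hncard : ∀ N : ℕ, (S ∩ {p : ℕ × ℕ | p.1 ≤ N ∧ p.2 ≤ N}).ncard = #{p ∈ box N | p ∈ S} := by
    intro N
    rw [← Set.ncard_coe_finset]
    congr 1
    ext p
    simp [box, and_comm]
  have hcompl : ∀ N : ℕ, (#{p ∈ box N | p ∉ S} : ℝ) = ((N : ℝ) + 1) ^ 2 - #{p ∈ box N | p ∈ S} := by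
    intro N
    have := card_filter_add_card_filter_not (s := box N) (· ∈ S)
    rw [card_product, card_range, ← sq] at this
    rw [eq_sub_iff_add_eq, add_comm]
    exact_mod_cast this
  have hsq : Tendsto (fun N : ℕ => ((N : ℝ) + 1) ^ 2 / (N : ℝ) ^ 2) atTop (𝓝 1) := by
    have h := ((tendsto_const_nhds (x := (1 : ℝ))).add
      (tendsto_inv_atTop_zero.comp tendsto_natCast_atTop_atTop)).pow 2
    rw [add_zero, one_pow] at h
    refine h.congr' ?_
    filter_upwards [eventually_ne_atTop 0] with N hN
    simp only [Function.comp_apply]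
    field_simp
  have hbox : Tendsto (fun N : ℕ => (#{p ∈ box N | p ∉ S} : ℝ) / (N : ℝ) ^ 2) atTop (𝓝 0) := by
    have h := hsq.sub (hS.congr fun N => by rw [hncard])
    rw [sub_self] at h
    exact h.congr fun N => by rw [hcompl, sub_div]
  refine squeeze_zero (fun N => by positivity) (fun N => ?_) hbox
  gcongr
  intro p hp
  simp only [box, mem_product, mem_Icc, mem_range] at hp ⊢
  omega

theorem tendsto_sum_abs_div_sq_of_statSignificant {a : ℕ × ℕ → ℝ} {M : ℝ}
    (hM : ∀ p, |a p| ≤ M) (hsig : ∀ ε, 0 < ε → StatSignificant {p | |a p| < ε}) :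
    Tendsto (fun N : ℕ => (∑ p ∈ Icc 1 N ×ˢ Icc 1 N, |a p|) / (N : ℝ) ^ 2) atTop (𝓝 0) := by
  classical
  refine tendsto_order.2 ⟨fun b hb => Eventually.of_forall fun N => hb.trans_le (by positivity),
    fun δ hδ => ?_⟩
  set S := {p : ℕ × ℕ | |a p| < δ / 2}
  have hbad := (((hsig _ (half_pos hδ)).tendsto_card_filter_notMem_div_sq).const_mul M).const_add
    (δ / 2)
  rw [mul_zero, add_zero] at hbad
  refine ((hbad.eventually_lt_const (half_lt_self hδ)).and (eventually_ne_atTop 0)).mono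
    fun N ⟨hlt, hN⟩ => ?_
  refine lt_of_le_of_lt ?_ hlt
  set P := Icc 1 N ×ˢ Icc 1 N
  have hP : (#P : ℝ) = (N : ℝ) ^ 2 := by simp [P, sq]
  have hsplit : ∑ p ∈ P, |a p| ≤ (N : ℝ) ^ 2 * (δ / 2) + M * #{p ∈ P | p ∉ S} := by
    rw [← sum_filter_add_sum_filter_not P (· ∈ S)]
    gcongr ?_ + ?_
    · calc ∑ p ∈ P with p ∈ S, |a p| ≤ #{p ∈ P | p ∈ S} • (δ / 2) :=
            sum_le_card_nsmul _ _ _ fun p hp => (mem_filter.1 hp).2.le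
        _ ≤ (N : ℝ) ^ 2 * (δ / 2) := by
            rw [nsmul_eq_mul, ← hP]
            gcongr
            exact filter_subset _ _
    · calc ∑ p ∈ P with p ∉ S, |a p| ≤ #{p ∈ P | p ∉ S} • M :=
            sum_le_card_nsmul _ _ _ fun p _ => hM p
        _ = M * #{p ∈ P | p ∉ S} := by rw [nsmul_eq_mul, mul_comm]
  calc (∑ p ∈ P, |a p|) / (N : ℝ) ^ 2 ≤ ((N : ℝ) ^ 2 * (δ / 2) + M * #{p ∈ P | p ∉ S}) / N ^ 2 := by
        gcongr
    _ = _ := by rw [add_div, mul_div_cancel_left₀ _ (by positivity), mul_div_assoc]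

theorem integral_sq_sum_mul {α ι : Type*} [MeasurableSpace α] {μ : Measure α} (t : Finset ι)
    (c : ι → ℝ) (W : ι → α → ℝ) (hW : ∀ i j, Integrable (fun x => W i x * W j x) μ) :
    ∫ x, (∑ i ∈ t, c i * W i x) ^ 2 ∂μ =
      ∑ p ∈ t ×ˢ t, c p.1 * c p.2 * ∫ x, W p.1 x * W p.2 x ∂μ := by
  calc ∫ x, (∑ i ∈ t, c i * W i x) ^ 2 ∂μ
      = ∫ x, ∑ p ∈ t ×ˢ t, c p.1 * c p.2 * (W p.1 x * W p.2 x) ∂μ := by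
        congr 1 with x
        rw [sq, sum_mul_sum, ← sum_product']
        exact sum_congr rfl fun p _ => by ring
    _ = ∑ p ∈ t ×ˢ t, ∫ x, c p.1 * c p.2 * (W p.1 x * W p.2 x) ∂μ :=
        integral_finsetSum _ fun p _ => (hW p.1 p.2).const_mul _
    _ = _ := sum_congr rfl fun p _ => integral_const_mul _ _

theorem integral_sq_sum_mul_le {α ι : Type*} [MeasurableSpace α] {μ : Measure α} (t : Finset ι)
    {c : ι → ℝ} {b : ℝ} (hc : ∀ i, |c i| ≤ b) (W : ι → α → ℝ)
    (hW : ∀ i j, Integrable (fun x => W i x * W j x) μ) :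
    ∫ x, (∑ i ∈ t, c i * W i x) ^ 2 ∂μ ≤
      b ^ 2 * ∑ p ∈ t ×ˢ t, |∫ x, W p.1 x * W p.2 x ∂μ| := by
  rw [integral_sq_sum_mul t c W hW, mul_sum]
  refine sum_le_sum fun p _ => (le_abs_self _).trans ?_
  rw [abs_mul, abs_mul, sq]
  have hb : 0 ≤ b := (abs_nonneg _).trans (hc p.1)
  gcongr
  exacts [hc p.1, hc p.2]

section WeightedAverage

variable {α : Type*}

noncomputable def weightedAvg (s : ℕ → ℕ → ℝ) (V : ℕ → α → ℝ) (N : ℕ) (x : α) : ℝ :=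
  (1 / (N : ℝ)) * ∑ n ∈ Icc 1 N, s n N * V n x

variable {s : ℕ → ℕ → ℝ} {sbar : ℝ}

theorem IsRegularSummation.weightedAvg_sub (hs : IsRegularSummation s sbar) {N : ℕ} (hN : N ≠ 0)
    (V : ℕ → α → ℝ) (g : α → ℝ) (x : α) :
    weightedAvg s V N x - g x = ∑ n ∈ Icc 1 N, s n N / N * (V n x - g x) := by
  obtain ⟨-, -, -, hsum⟩ := hs
  have hN' : (N : ℝ) ≠ 0 := Nat.cast_ne_zero.2 hN
  calc weightedAvg s V N x - g x
      = weightedAvg s V N x - (∑ n ∈ Icc 1 N, s n N) / N * g x := by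
        rw [hsum N, div_self hN', one_mul]
    _ = _ := by
        rw [weightedAvg, sum_div, sum_mul, mul_sum, ← sum_sub_distrib]
        exact sum_congr rfl fun n _ => by ring

theorem IsRegularSummation.abs_weightedAvg_le (hs : IsRegularSummation s sbar)
    {V : ℕ → α → ℝ} {C : ℝ} (hC : 0 ≤ C) {x : α} (hV : ∀ n, |V n x| ≤ C) (N : ℕ) :
    |weightedAvg s V N x| ≤ C := by
  obtain ⟨hs_nonneg, -, -, hsum⟩ := hs
  rcases eq_or_ne N 0 with rfl | hN
  · simpa [weightedAvg] using hC
  have hN' : (0 : ℝ) < N := by positivity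
  calc |weightedAvg s V N x| ≤ 1 / N * ∑ n ∈ Icc 1 N, s n N * C := by
        rw [weightedAvg, abs_mul, abs_of_pos (one_div_pos.2 hN')]
        gcongr
        refine (abs_sum_le_sum_abs _ _).trans (sum_le_sum fun n _ => ?_)
        rw [abs_mul, abs_of_nonneg (hs_nonneg n N)]
        exact mul_le_mul_of_nonneg_left (hV n) (hs_nonneg n N)
    _ = C := by rw [← sum_mul, hsum N]; field_simp

theorem IsRegularSummation.tendsto_integral_sq_weightedAvg_sub [MeasurableSpace α]
    {μ : Measure α} [IsFiniteMeasure μ] (hs : IsRegularSummation s sbar) {V : ℕ → α → ℝ}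
    {g : α → ℝ} {K : ℝ} (hmeas : ∀ n, AEStronglyMeasurable (fun x => V n x - g x) μ)
    (hK : ∀ n, ∀ᵐ x ∂μ, |V n x - g x| ≤ K)
    (hsig : ∀ ε, 0 < ε → StatSignificant
      {p : ℕ × ℕ | |∫ x, (V p.1 x - g x) * (V p.2 x - g x) ∂μ| < ε}) :
    Tendsto (fun N : ℕ => ∫ x, (weightedAvg s V N x - g x) ^ 2 ∂μ) atTop (𝓝 0) := by
  have hprod_bdd : ∀ n m, ∀ᵐ x ∂μ, ‖(V n x - g x) * (V m x - g x)‖ ≤ K ^ 2 := fun n m => by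
    filter_upwards [hK n, hK m] with x hn hm
    rw [Real.norm_eq_abs, abs_mul, sq]
    exact mul_le_mul hn hm (abs_nonneg _) ((abs_nonneg _).trans hn)
  have hint : ∀ n m, Integrable (fun x => (V n x - g x) * (V m x - g x)) μ := fun n m =>
    .of_bound ((hmeas n).mul (hmeas m)) _ (hprod_bdd n m)
  have hI : ∀ p : ℕ × ℕ, |∫ x, (V p.1 x - g x) * (V p.2 x - g x) ∂μ| ≤ K ^ 2 * μ.real Set.univ :=
    fun p => norm_integral_le_of_norm_le_const (hprod_bdd p.1 p.2)
  have hlim := (tendsto_sum_abs_div_sq_of_statSignificant hI hsig).const_mul (sbar ^ 2)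
  rw [mul_zero] at hlim
  refine squeeze_zero' (Eventually.of_forall fun N => integral_nonneg fun x => sq_nonneg _) ?_ hlim
  filter_upwards [eventually_ne_atTop 0] with N hN
  have hc : ∀ n, |s n N / N| ≤ sbar / N := fun n => by
    rw [abs_of_nonneg (div_nonneg (hs.1 n N) (Nat.cast_nonneg N))]
    exact div_le_div_of_nonneg_right (hs.2.1 n N) (Nat.cast_nonneg N)
  calc ∫ x, (weightedAvg s V N x - g x) ^ 2 ∂μ
      = ∫ x, (∑ n ∈ Icc 1 N, s n N / N * (V n x - g x)) ^ 2 ∂μ := by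
        simp_rw [hs.weightedAvg_sub hN]
    _ ≤ (sbar / N) ^ 2 * ∑ p ∈ Icc 1 N ×ˢ Icc 1 N,
          |∫ x, (V p.1 x - g x) * (V p.2 x - g x) ∂μ| :=
        integral_sq_sum_mul_le _ hc (fun n x => V n x - g x) hint
    _ = _ := by ring

end WeightedAverage

section Lp

variable {α E : Type*} [MeasurableSpace α] {μ : Measure α}

theorem tendsto_eLpNorm_two_of_tendsto_integral_sq {f : ℕ → α → ℝ} (hf : ∀ n, MemLp (f n) 2 μ)
    (h : Tendsto (fun n => ∫ x, f n x ^ 2 ∂μ) atTop (𝓝 0)) :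
    Tendsto (fun n => eLpNorm (f n) 2 μ) atTop (𝓝 0) := by
  have hnorm : ∀ n, eLpNorm (f n) 2 μ = ENNReal.ofReal √(∫ x, f n x ^ 2 ∂μ) := fun n => by
    simp [(hf n).eLpNorm_eq_integral_rpow_norm two_ne_zero ENNReal.ofNat_ne_top,
      Real.sqrt_eq_rpow]
  have hlim := ((ENNReal.continuous_ofReal.comp Real.continuous_sqrt).tendsto 0).comp h
  simp only [Function.comp_def, Real.sqrt_zero, ENNReal.ofReal_zero] at hlim
  simpa only [hnorm] using hlim

variable [NormedAddCommGroup E]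

theorem unifIntegrable_of_ae_norm_le {ι : Type*} {f : ι → α → E} {K : ℝ} {p : ℝ≥0∞}
    (hp : 1 ≤ p) (hp' : p ≠ ∞) (hf : ∀ i, AEStronglyMeasurable (f i) μ)
    (hK : ∀ i, ∀ᵐ x ∂μ, ‖f i x‖ ≤ K) : UnifIntegrable f p μ := by
  refine unifIntegrable_of hp hp' hf fun ε hε => ⟨K.toNNReal + 1, fun i => ?_⟩
  have hzero : {x | K.toNNReal + 1 ≤ ‖f i x‖₊}.indicator (f i) =ᵐ[μ] 0 := by
    filter_upwards [hK i] with x hx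
    refine Set.indicator_of_notMem (fun hmem => ?_) _
    have h : ((K.toNNReal + 1 : ℝ≥0) : ℝ) ≤ ‖f i x‖ := NNReal.coe_le_coe.2 hmem
    push_cast at h
    linarith [Real.le_coe_toNNReal K]
  rw [eLpNorm_congr_ae hzero, eLpNorm_zero]
  exact bot_le

theorem tendsto_eLpNorm_sub_of_tendsto_eLpNorm_sub_of_ae_norm_le [IsFiniteMeasure μ]
    {f : ℕ → α → E} {g : α → E} {K : ℝ} {p q : ℝ≥0∞} (hp : p ≠ 0) (hq : 1 ≤ q) (hq' : q ≠ ∞)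
    (hf : ∀ n, AEStronglyMeasurable (f n) μ) (hK : ∀ n, ∀ᵐ x ∂μ, ‖f n x‖ ≤ K)
    (hg : MemLp g q μ) (hfg : Tendsto (fun n => eLpNorm (f n - g) p μ) atTop (𝓝 0)) :
    Tendsto (fun n => eLpNorm (f n - g) q μ) atTop (𝓝 0) :=
  tendsto_Lp_finite_of_tendstoInMeasure hq hq' hf hg (unifIntegrable_of_ae_norm_le hq hq' hf hK)
    (tendstoInMeasure_of_tendsto_eLpNorm hp hf hg.aestronglyMeasurable hfg)

end Lp

theorem weighted_averages_tendsto_of_statSignificant_all_methods_general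
    {D : ℕ} (Q : Set (EuclideanSpace ℝ (Fin D)))
    (hQbdd : Bornology.IsBounded Q)
    (V : ℕ → EuclideanSpace ℝ (Fin D) → ℝ)
    (hVmeas : ∀ n, Measurable (V n))
    (C : ℝ) (hC : ∀ n, ∀ᵐ x ∂(volume.restrict Q), |V n x| ≤ C)
    (Vlim : EuclideanSpace ℝ (Fin D) → ℝ)
    (hVlim : MemLp Vlim ⊤ (volume.restrict Q))
    (hsig : ∀ ε : ℝ, 0 < ε → StatSignificant
      {p : ℕ × ℕ |
        |∫ x in Q, (V p.1 x - Vlim x) * (V p.2 x - Vlim x)| < ε}) :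
    ∀ (s : ℕ → ℕ → ℝ) (sbar : ℝ), IsRegularSummation s sbar →
      ∀ q : ℝ≥0∞, 1 ≤ q → q ≠ ⊤ →
        Filter.Tendsto (fun N : ℕ =>
          eLpNorm (fun x => (1 / (N : ℝ)) * ∑ n ∈ Finset.Icc 1 N, s n N * V n x - Vlim x)
            q (volume.restrict Q)) Filter.atTop (nhds 0) := by
  intro s sbar hs q hq hq'
  set μ := volume.restrict Q
  have : IsFiniteMeasure μ := isFiniteMeasure_restrict.2 hQbdd.measure_lt_top.ne
  set C₀ := max C 0
  set K := C₀ + lpNorm Vlim ∞ μ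
  have hV_bdd : ∀ n, ∀ᵐ x ∂μ, |V n x| ≤ C₀ := fun n =>
    (hC n).mono fun x hx => hx.trans (le_max_left _ _)
  have hW_bdd : ∀ n, ∀ᵐ x ∂μ, |V n x - Vlim x| ≤ K := fun n => by
    filter_upwards [hV_bdd n, ae_le_lpNorm_exponent_top hVlim] with x hVx hx
    exact (abs_sub _ _).trans (add_le_add hVx hx)
  have hW_meas : ∀ n, AEStronglyMeasurable (fun x => V n x - Vlim x) μ :=
    fun n => (hVmeas n).aestronglyMeasurable.sub hVlim.1
  have hA_meas : ∀ N, AEStronglyMeasurable (weightedAvg s V N) μ := fun N => by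
    unfold weightedAvg
    fun_prop
  have hA_bdd : ∀ N, ∀ᵐ x ∂μ, ‖weightedAvg s V N x‖ ≤ C₀ := fun N => by
    filter_upwards [ae_all_iff.2 hV_bdd] with x hx
    exact hs.abs_weightedAvg_le (le_max_right _ _) hx N
  have hL2 : Tendsto (fun N => eLpNorm (weightedAvg s V N - Vlim) 2 μ) atTop (𝓝 0) :=
    tendsto_eLpNorm_two_of_tendsto_integral_sq
      (fun N => ((memLp_top_of_bound (hA_meas N) _ (hA_bdd N)).sub hVlim).mono_exponent le_top)
      (hs.tendsto_integral_sq_weightedAvg_sub hW_meas hW_bdd hsig)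
  exact tendsto_eLpNorm_sub_of_tendsto_eLpNorm_sub_of_ae_norm_le two_ne_zero hq hq' hA_meas
    hA_bdd (hVlim.mono_exponent le_top) hL2

/-- Corollary 3.3 of the paper: if for every `ε > 0` the set
`S_ε = {(n,m) : |∫_Q (V_n − V)(V_m − V)| < ε}` is statistically significant, then
for every regular summation method the weighted averages `(1/N) ∑_{n=1}^N s_{n,N} V_n`
converge to `V` in `L^q(Q)` for every `1 ≤ q < ∞`. -/
theorem weighted_averages_tendsto_of_statSignificant_all_methods
    {D : ℕ} (Q : Set (EuclideanSpace ℝ (Fin D)))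
    (hQopen : IsOpen Q) (hQbdd : Bornology.IsBounded Q)
    (V : ℕ → EuclideanSpace ℝ (Fin D) → ℝ)
    (hVmeas : ∀ n, Measurable (V n))
    (C : ℝ) (hC : ∀ n, ∀ᵐ x ∂(volume.restrict Q), |V n x| ≤ C)
    (Vlim : EuclideanSpace ℝ (Fin D) → ℝ)
    (hVlim : MemLp Vlim ⊤ (volume.restrict Q))
    (hsig : ∀ ε : ℝ, 0 < ε → StatSignificant
      {p : ℕ × ℕ |
        |∫ x in Q, (V p.1 x - Vlim x) * (V p.2 x - Vlim x)| < ε}) :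
    ∀ (s : ℕ → ℕ → ℝ) (sbar : ℝ), IsRegularSummation s sbar →
      ∀ q : ℝ≥0∞, 1 ≤ q → q ≠ ⊤ →
        Filter.Tendsto (fun N : ℕ =>
          eLpNorm (fun x => (1 / (N : ℝ)) * ∑ n ∈ Finset.Icc 1 N, s n N * V n x - Vlim x)
            q (volume.restrict Q)) Filter.atTop (nhds 0) :=
  weighted_averages_tendsto_of_statSignificant_all_methods_general Q hQbdd V hVmeas C hC Vlim hVlim
    hsig
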